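/- Let A be a k-linear Hopf category with object class X, and let M be a Hopf module over A. Then for all x, y ∈ X, the k-linear map M^{co}_x ⊗_k A_{x,y} → M_{x,y} determined by m ⊗ a ↦ ma is bijective, with inverse given by m ↦ m_[0] S_{x,y}(m_[1]) ⊗ m_[2] (where m_[0] ⊗ m_[1] ⊗ m_[2] denotes the twofold coaction of m ∈ M_{x,y}). -/

import Mathlib

/-!
The inverse is `β m = m₍₀₎ S(m₍₁₎) ⊗ m₍₂₎`. Everything is phrased through the convolution
`v ↦ μ (f v₍₁₎) (g v₍₂₎)` along a coaction, whose associativity is coassociativity and whose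
units are counit maps. The one non-formal ingredient is that the antipode reverses the
comultiplication, `Δ (S h) = S h₍₂₎ ⊗ S h₍₁₎`, proved by the classical argument that `Δ ∘ S` and
`(S ⊗ S) ∘ τ ∘ Δ` are a left and a right convolution inverse of `Δ`. It makes
`P m = m₍₀₎ S(m₍₁₎)` coinvariant; then `P m₍₀₎ · m₍₁₎ = m` by the right antipode axiom, and
`P (n a) = ε(a) n` for coinvariant `n` by the left one, which are the two inverse identities.
-/

open TensorProduct

/-- The submodule of coinvariants of a Hopf module. -/
noncomputable def coinv {k : Type*} [CommRing k] {Mxx Axx : Type*}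
    [AddCommGroup Mxx] [Module k Mxx] [AddCommGroup Axx] [Module k Axx]
    (ρxx : Mxx →ₗ[k] Mxx ⊗[k] Axx) (o : Axx) : Submodule k Mxx :=
  LinearMap.ker (ρxx - (TensorProduct.mk k Mxx Axx).flip o)

/-- The map `m ↦ m₍₀₎ S(m₍₁₎) ⊗ m₍₂₎`, expressed through the iterated coaction `ρxy` and
the map `θ : m ⊗ a ↦ m · S(a)`. -/
noncomputable def betaMap {k : Type*} [CommRing k] {Mxy Axy Mxx : Type*}
    [AddCommGroup Mxy] [Module k Mxy] [AddCommGroup Axy] [Module k Axy]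
    [AddCommGroup Mxx] [Module k Mxx]
    (ρxy : Mxy →ₗ[k] Mxy ⊗[k] Axy) (θ : Mxy ⊗[k] Axy →ₗ[k] Mxx) :
    Mxy →ₗ[k] Mxx ⊗[k] Axy :=
  (TensorProduct.map θ LinearMap.id) ∘ₗ (TensorProduct.map ρxy LinearMap.id) ∘ₗ ρxy

namespace TensorProduct

section Convolution

variable {k V C D E P Q R : Type*} [CommSemiring k]
  [AddCommMonoid V] [Module k V] [AddCommMonoid C] [Module k C] [AddCommMonoid D] [Module k D]
  [AddCommMonoid E] [Module k E] [AddCommMonoid P] [Module k P] [AddCommMonoid Q] [Module k Q]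
  [AddCommMonoid R] [Module k R]

/-- `v ↦ μ (f v₍₁₎) (g v₍₂₎)` in Sweedler notation `δ v = v₍₁₎ ⊗ v₍₂₎`. -/
def convolve (δ : V →ₗ[k] C ⊗[k] D) (μ : P →ₗ[k] Q →ₗ[k] R) (f : C →ₗ[k] P)
    (g : D →ₗ[k] Q) : V →ₗ[k] R :=
  lift μ ∘ₗ map f g ∘ₗ δ

variable (δ : V →ₗ[k] C ⊗[k] D) (μ : P →ₗ[k] Q →ₗ[k] R) (f : C →ₗ[k] P) (g : D →ₗ[k] Q)

theorem convolve_mk : convolve δ (mk k P Q) f g = map f g ∘ₗ δ := by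
  rw [convolve, lift_mk, LinearMap.id_comp]

theorem convolve_mk_id_id : convolve δ (mk k C D) LinearMap.id LinearMap.id = δ := by
  rw [convolve_mk, map_id, LinearMap.id_comp]

theorem convolve_rTensor_comp {C' : Type*} [AddCommMonoid C'] [Module k C']
    (δ : V →ₗ[k] C' ⊗[k] D) (φ : C' →ₗ[k] C) :
    convolve (φ.rTensor D ∘ₗ δ) μ f g = convolve δ μ (f ∘ₗ φ) g := by
  rw [convolve, convolve, ← LinearMap.comp_assoc _ (φ.rTensor D), LinearMap.map_comp_rTensor]

theorem comp_convolve {R' : Type*} [AddCommMonoid R'] [Module k R'] (φ : R →ₗ[k] R') :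
    φ ∘ₗ convolve δ μ f g = convolve δ (μ.compr₂ φ) f g := by
  rw [convolve, convolve, lift_compr₂, LinearMap.comp_assoc]

theorem convolve_comp_comp {C' D' : Type*} [AddCommMonoid C'] [Module k C'] [AddCommMonoid D']
    [Module k D'] (f' : C' →ₗ[k] P) (g' : D' →ₗ[k] Q) (f : C →ₗ[k] C') (g : D →ₗ[k] D') :
    convolve δ μ (f' ∘ₗ f) (g' ∘ₗ g) = convolve δ (μ.compl₁₂ f' g') f g := by
  rw [convolve, convolve, map_comp, ← LinearMap.comp_assoc, ← LinearMap.comp_assoc,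
    lift_comp_map, LinearMap.comp_assoc]
  rfl

theorem convolve_comp_left {C' : Type*} [AddCommMonoid C'] [Module k C'] (f' : C' →ₗ[k] P)
    (f : C →ₗ[k] C') : convolve δ μ (f' ∘ₗ f) g = convolve δ (μ ∘ₗ f') f g := by
  rw [← LinearMap.id_comp g, convolve_comp_comp]
  rfl

theorem convolve_comp_right {D' : Type*} [AddCommMonoid D'] [Module k D'] (g' : D' →ₗ[k] Q)
    (g : D →ₗ[k] D') : convolve δ μ f (g' ∘ₗ g) = convolve δ (μ.compl₂ g') f g := by
  rw [← LinearMap.id_comp f, convolve_comp_comp]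
  rfl

theorem convolve_smulRight_left (δ : D →ₗ[k] C ⊗[k] D) (ε : C →ₗ[k] k) (u : P)
    (hε : (TensorProduct.lid k D).toLinearMap ∘ₗ ε.rTensor D ∘ₗ δ = LinearMap.id) :
    convolve δ μ (ε.smulRight u) g = μ u ∘ₗ g := by
  have key : lift μ ∘ₗ map (ε.smulRight u) g
      = μ u ∘ₗ g ∘ₗ (TensorProduct.lid k D).toLinearMap ∘ₗ ε.rTensor D := by
    ext c d
    simp
  rw [convolve, ← LinearMap.comp_assoc, key]
  simp only [LinearMap.comp_assoc, hε, LinearMap.comp_id]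

theorem convolve_smulRight_right (δ : C →ₗ[k] C ⊗[k] D) (ε : D →ₗ[k] k) (u : Q)
    (hε : (TensorProduct.rid k C).toLinearMap ∘ₗ ε.lTensor C ∘ₗ δ = LinearMap.id) :
    convolve δ μ f (ε.smulRight u) = μ.flip u ∘ₗ f := by
  have key : lift μ ∘ₗ map f (ε.smulRight u)
      = μ.flip u ∘ₗ f ∘ₗ (TensorProduct.rid k C).toLinearMap ∘ₗ ε.lTensor C := by
    ext c d
    simp
  rw [convolve, ← LinearMap.comp_assoc, key]
  simp only [LinearMap.comp_assoc, hε, LinearMap.comp_id]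

theorem rTensor_smulRight_comp (δ : D →ₗ[k] C ⊗[k] D) (ε : C →ₗ[k] k) (u : P)
    (hε : (TensorProduct.lid k D).toLinearMap ∘ₗ ε.rTensor D ∘ₗ δ = LinearMap.id) :
    (ε.smulRight u).rTensor D ∘ₗ δ = mk k P D u :=
  (convolve_mk δ _ _).symm.trans (convolve_smulRight_left _ _ _ _ _ hε)

theorem rTensor_comp_eq_mk_of_comp_eq_smulRight {W : Type*} [AddCommMonoid W] [Module k W]
    (δ : V →ₗ[k] V ⊗[k] D) (Δ : D →ₗ[k] D ⊗[k] D) (ε : D →ₗ[k] k)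
    (hε : (TensorProduct.lid k D).toLinearMap ∘ₗ ε.rTensor D ∘ₗ Δ = LinearMap.id)
    (φ : D →ₗ[k] V) (hφ : δ ∘ₗ φ = φ.rTensor D ∘ₗ Δ) (Q : V →ₗ[k] W) (w : W)
    (hQ : Q ∘ₗ φ = ε.smulRight w) :
    Q.rTensor D ∘ₗ δ ∘ₗ φ = mk k W D w := by
  rw [hφ, ← LinearMap.comp_assoc, ← LinearMap.rTensor_comp, hQ, rTensor_smulRight_comp _ _ _ hε]

theorem convolve_assoc {P' Q' R' S₁ S₂ : Type*} [AddCommMonoid P'] [Module k P']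
    [AddCommMonoid Q'] [Module k Q'] [AddCommMonoid R'] [Module k R'] [AddCommMonoid S₁]
    [Module k S₁] [AddCommMonoid S₂] [Module k S₂]
    (δ : V →ₗ[k] C ⊗[k] D) (δL : C →ₗ[k] C ⊗[k] E) (δR : D →ₗ[k] E ⊗[k] D)
    (hδ : (TensorProduct.assoc k C E D).toLinearMap ∘ₗ δL.rTensor D ∘ₗ δ = δR.lTensor C ∘ₗ δ)
    (f : C →ₗ[k] P') (g : E →ₗ[k] Q') (h : D →ₗ[k] R')
    (μ₁ : P' →ₗ[k] Q' →ₗ[k] S₁) (μ₂ : S₁ →ₗ[k] R' →ₗ[k] R)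
    (μ₃ : Q' →ₗ[k] R' →ₗ[k] S₂) (μ₄ : P' →ₗ[k] S₂ →ₗ[k] R)
    (hμ : ∀ p q r, μ₂ (μ₁ p q) r = μ₄ p (μ₃ q r)) :
    convolve δ μ₂ (convolve δL μ₁ f g) h = convolve δ μ₄ f (convolve δR μ₃ g h) := by
  have key : lift μ₂ ∘ₗ map (lift μ₁ ∘ₗ map f g) h
      = lift μ₄ ∘ₗ map f (lift μ₃ ∘ₗ map g h) ∘ₗ (TensorProduct.assoc k C E D).toLinearMap := by
    ext c e d
    simp [hμ]
  calc convolve δ μ₂ (convolve δL μ₁ f g) h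
      = (lift μ₂ ∘ₗ map (lift μ₁ ∘ₗ map f g) h) ∘ₗ δL.rTensor D ∘ₗ δ := by
        rw [convolve, convolve, LinearMap.comp_assoc, ← LinearMap.comp_assoc _ (δL.rTensor D),
          LinearMap.map_comp_rTensor]
        rfl
    _ = lift μ₄ ∘ₗ map f (lift μ₃ ∘ₗ map g h) ∘ₗ δR.lTensor C ∘ₗ δ := by
        rw [key, ← hδ]
        rfl
    _ = convolve δ μ₄ f (convolve δR μ₃ g h) := by
        rw [convolve, convolve, ← LinearMap.comp_assoc _ (δR.lTensor C),
          LinearMap.map_comp_lTensor]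
        rfl

theorem map₂_apply_eq {P' Q' R' : Type*} [AddCommMonoid P'] [Module k P'] [AddCommMonoid Q']
    [Module k Q'] [AddCommMonoid R'] [Module k R'] (μ : P →ₗ[k] Q →ₗ[k] R)
    (ν : P' →ₗ[k] Q' →ₗ[k] R') (s : P ⊗[k] P') (t : Q ⊗[k] Q') :
    map₂ μ ν s t = map (lift μ) (lift ν) (tensorTensorTensorComm k P P' Q Q' (s ⊗ₜ t)) := by
  have h : map₂ μ ν
      = curry (map (lift μ) (lift ν) ∘ₗ (tensorTensorTensorComm k P P' Q Q').toLinearMap) := by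
    ext
    simp
  rw [h]
  rfl

end Convolution

end TensorProduct

theorem betaMap_eq {k V B W : Type*} [CommRing k] [AddCommGroup V] [Module k V]
    [AddCommGroup B] [Module k B] [AddCommGroup W] [Module k W] (δ : V →ₗ[k] V ⊗[k] B)
    (θ : V ⊗[k] B →ₗ[k] W) : betaMap δ θ = (θ ∘ₗ δ).rTensor B ∘ₗ δ := by
  rw [betaMap, LinearMap.rTensor_comp]
  rfl

theorem mem_coinv_iff {k W C : Type*} [CommRing k] [AddCommGroup W] [Module k W]
    [AddCommGroup C] [Module k C] (ρ : W →ₗ[k] W ⊗[k] C) (o : C) (w : W) :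
    w ∈ coinv ρ o ↔ ρ w = w ⊗ₜ o := by
  simp [coinv, sub_eq_zero]

theorem bijective_lift_comp_subtype_coinv {k W C V B : Type*} [CommRing k] [AddCommGroup W]
    [Module k W] [AddCommGroup C] [Module k C] [AddCommGroup V] [Module k V] [AddCommGroup B]
    [Module k B] (ρ : W →ₗ[k] W ⊗[k] C) (o : C) (act : W →ₗ[k] B →ₗ[k] V)
    (δ : V →ₗ[k] V ⊗[k] B) (Δ : B →ₗ[k] B ⊗[k] B) (ε : B →ₗ[k] k)
    (hcounit : (TensorProduct.lid k B).toLinearMap ∘ₗ ε.rTensor B ∘ₗ Δ = LinearMap.id)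
    (P : V →ₗ[k] W) (hP : ρ ∘ₗ P = (mk k W C).flip o ∘ₗ P)
    (hsection : convolve δ act P LinearMap.id = LinearMap.id)
    (hact : ∀ w ∈ coinv ρ o, δ ∘ₗ act w = (act w).rTensor B ∘ₗ Δ)
    (hPact : ∀ w ∈ coinv ρ o, P ∘ₗ act w = ε.smulRight w) :
    Function.Bijective (lift (act ∘ₗ (coinv ρ o).subtype)) := by
  set P' := P.codRestrict (coinv ρ o) fun v =>
    (mem_coinv_iff ρ o (P v)).2 (LinearMap.congr_fun hP v)
  have hleft : lift (act ∘ₗ (coinv ρ o).subtype) ∘ₗ P'.rTensor B ∘ₗ δ = LinearMap.id := by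
    have hP' : lift (act ∘ₗ (coinv ρ o).subtype) ∘ₗ P'.rTensor B
        = lift act ∘ₗ map P LinearMap.id := by
      ext v b
      rfl
    rw [← LinearMap.comp_assoc, hP']
    exact hsection
  have hright : P'.rTensor B ∘ₗ δ ∘ₗ lift (act ∘ₗ (coinv ρ o).subtype) = LinearMap.id := by
    ext w b
    have hP'act : P' ∘ₗ act w = ε.smulRight w :=
      LinearMap.ext fun a => Subtype.ext (LinearMap.congr_fun (hPact w w.2) a)
    exact LinearMap.congr_fun
      (rTensor_comp_eq_mk_of_comp_eq_smulRight δ Δ ε hcounit _ (hact w w.2) P' w hP'act) b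
  exact Function.bijective_iff_has_inverse.2
    ⟨P'.rTensor B ∘ₗ δ, LinearMap.congr_fun hright, LinearMap.congr_fun hleft⟩

namespace HopfCategory

variable {k X : Type*} [CommSemiring k] {A : X → X → Type*} [∀ x y, AddCommMonoid (A x y)]
  [∀ x y, Module k (A x y)] (Δ : ∀ x y, A x y →ₗ[k] A x y ⊗[k] A x y)
  (ε : ∀ x y, A x y →ₗ[k] k) (mul : ∀ x y z, A x y →ₗ[k] A y z →ₗ[k] A x z) (one : ∀ x, A x x)
  (S : ∀ x y, A x y →ₗ[k] A y x)

/-- In Sweedler notation, with `δL` and `Δ` iterating `δ`: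
`ψ (v₍₀₎, S v₍₃₎) ⊗ v₍₁₎ S v₍₂₎ = ψ (v₍₀₎, S v₍₁₎) ⊗ 1`. -/
theorem convolve_map₂_antipode_cop {V C N : Type*} [AddCommMonoid V] [Module k V]
    [AddCommMonoid C] [Module k C] [AddCommMonoid N] [Module k N] (x y : X)
    (hcoassoc : (TensorProduct.assoc k _ _ _).toLinearMap ∘ₗ (Δ x y).rTensor _ ∘ₗ Δ x y
      = (Δ x y).lTensor _ ∘ₗ Δ x y)
    (hcounit : (TensorProduct.lid k _).toLinearMap ∘ₗ (ε x y).rTensor _ ∘ₗ Δ x y = LinearMap.id)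
    (hS : convolve (Δ x y) (mul x y x) LinearMap.id (S x y) = (ε x y).smulRight (one x))
    (δ : V →ₗ[k] C ⊗[k] A x y) (δL : C →ₗ[k] C ⊗[k] A x y)
    (hδ : (TensorProduct.assoc k _ _ _).toLinearMap ∘ₗ δL.rTensor _ ∘ₗ δ
      = (Δ x y).lTensor _ ∘ₗ δ)
    (ψ : C →ₗ[k] A y x →ₗ[k] N) :
    convolve δ (map₂ ψ (mul x y x)) δL (convolve (Δ x y) (mk k _ _).flip (S x y) (S x y))
      = (mk k N (A x x)).flip (one x) ∘ₗ convolve δ ψ LinearMap.id (S x y) := by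
  have hinner : convolve (Δ x y) (LinearMap.lTensorHom (A y x) ∘ₗ mul x y x) LinearMap.id
        (convolve (Δ x y) (mk k _ _).flip (S x y) (S x y))
      = (mk k (A y x) (A x x)).flip (one x) ∘ₗ S x y := by
    rw [← convolve_assoc (Δ x y) (Δ x y) (Δ x y) hcoassoc _ _ _ (mul x y x)
      (mk k (A y x) (A x x)).flip _ _ (fun _ _ _ => rfl), hS,
      convolve_smulRight_left _ _ _ _ _ hcounit]
  have hμ : ∀ p q t, map₂ ψ (mul x y x) (p ⊗ₜ q) t
      = LinearMap.rTensorHom (A x x) (ψ p) (LinearMap.lTensorHom (A y x) (mul x y x q) t) :=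
    fun p q t =>
      LinearMap.congr_fun (LinearMap.rTensor_comp_lTensor (A y x) (ψ p) (mul x y x q)).symm t
  rw [← convolve_mk_id_id δL, convolve_assoc δ δL (Δ x y) hδ _ _ _ _ _
      (LinearMap.lTensorHom (A y x) ∘ₗ mul x y x) (LinearMap.rTensorHom (A x x) ∘ₗ ψ) hμ,
    hinner, convolve_comp_right, comp_convolve]
  rfl

theorem map₂_mul_assoc (x y z w : X)
    (hassoc : ∀ a b c, mul x z w (mul x y z a b) c = mul x y w a (mul y z w b c))
    (s : A x y ⊗[k] A x y) (t : A y z ⊗[k] A y z) (u : A z w ⊗[k] A z w) :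
    map₂ (mul x z w) (mul x z w) (map₂ (mul x y z) (mul x y z) s t) u
      = map₂ (mul x y w) (mul x y w) s (map₂ (mul y z w) (mul y z w) t u) := by
  induction s using TensorProduct.induction_on with
  | zero => simp
  | add s s' hs hs' => simp only [map_add, LinearMap.add_apply, hs, hs']
  | tmul a a' =>
    induction t using TensorProduct.induction_on with
    | zero => simp
    | add t t' ht ht' => simp only [map_add, LinearMap.add_apply, ht, ht']
    | tmul b b' =>
      induction u using TensorProduct.induction_on with
      | zero => simp
      | add u u' hu hu' => simp only [map_add, hu, hu']
      | tmul c c' => simp [hassoc]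

/-- `Δ ∘ S` is a left and `(S ⊗ S) ∘ τ ∘ Δ` a right inverse of `Δ` for the convolution
product built from the componentwise multiplication of `A ⊗ A`, so they agree. -/
theorem comul_comp_antipode (x y : X)
    (hcoassoc : (TensorProduct.assoc k _ _ _).toLinearMap ∘ₗ (Δ x y).rTensor _ ∘ₗ Δ x y
      = (Δ x y).lTensor _ ∘ₗ Δ x y)
    (hcounitL : (TensorProduct.lid k _).toLinearMap ∘ₗ (ε x y).rTensor _ ∘ₗ Δ x y = LinearMap.id)
    (hcounitR : (TensorProduct.rid k _).toLinearMap ∘ₗ (ε x y).lTensor _ ∘ₗ Δ x y = LinearMap.id)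
    (hSl : convolve (Δ x y) (mul x y x) LinearMap.id (S x y) = (ε x y).smulRight (one x))
    (hSr : convolve (Δ x y) (mul y x y) (S x y) LinearMap.id = (ε x y).smulRight (one y))
    (hΔmul : ∀ a b, Δ y y (mul y x y a b) = map₂ (mul y x y) (mul y x y) (Δ y x a) (Δ x y b))
    (hΔone : Δ y y (one y) = one y ⊗ₜ one y)
    (hassoc : ∀ a b c, mul y y x (mul y x y a b) c = mul y x x a (mul x y x b c))
    (hone_mul : ∀ a, mul y y x (one y) a = a) (hmul_one : ∀ a, mul y x x a (one x) = a) :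
    Δ y x ∘ₗ S x y = convolve (Δ x y) (mk k (A y x) (A y x)).flip (S x y) (S x y) := by
  set G := convolve (Δ x y) (mk k (A y x) (A y x)).flip (S x y) (S x y)
  have hleft : convolve (Δ x y) (map₂ (mul y x y) (mul y x y)) (Δ y x ∘ₗ S x y) (Δ x y)
      = (ε x y).smulRight (one y ⊗ₜ one y) := by
    have hΔmul' : (mul y x y).compr₂ (Δ y y)
        = (map₂ (mul y x y) (mul y x y)).compl₁₂ (Δ y x) (Δ x y) := by
      ext a b
      exact hΔmul a b
    calc convolve (Δ x y) (map₂ (mul y x y) (mul y x y)) (Δ y x ∘ₗ S x y) (Δ x y)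
        = convolve (Δ x y) (map₂ (mul y x y) (mul y x y)) (Δ y x ∘ₗ S x y)
            (Δ x y ∘ₗ LinearMap.id) := rfl
      _ = Δ y y ∘ₗ convolve (Δ x y) (mul y x y) (S x y) LinearMap.id := by
        rw [convolve_comp_comp, ← hΔmul', comp_convolve]
      _ = (ε x y).smulRight (one y ⊗ₜ one y) := by
        rw [hSr]
        ext a
        simp [hΔone]
  have hright : convolve (Δ x y) (map₂ (mul x y x) (mul x y x)) (Δ x y) G
      = (ε x y).smulRight (one x ⊗ₜ one x) := by
    rw [convolve_map₂_antipode_cop Δ ε mul one S x y hcoassoc hcounitL hSl _ _ hcoassoc, hSl]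
    ext a
    simp
  have hunitR : (map₂ (mul y x x) (mul y x x)).flip (one x ⊗ₜ one x) = LinearMap.id :=
    TensorProduct.ext' fun a b => by simp [hmul_one]
  have hunitL : map₂ (mul y y x) (mul y y x) (one y ⊗ₜ one y) = LinearMap.id :=
    TensorProduct.ext' fun a b => by simp [hone_mul]
  calc Δ y x ∘ₗ S x y
      = convolve (Δ x y) (map₂ (mul y x x) (mul y x x)) (Δ y x ∘ₗ S x y)
          ((ε x y).smulRight (one x ⊗ₜ one x)) := by
        rw [convolve_smulRight_right _ _ _ _ _ hcounitR, hunitR, LinearMap.id_comp]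
    _ = convolve (Δ x y) (map₂ (mul y x x) (mul y x x)) (Δ y x ∘ₗ S x y)
          (convolve (Δ x y) (map₂ (mul x y x) (mul x y x)) (Δ x y) G) := by
        rw [hright]
    _ = convolve (Δ x y) (map₂ (mul y y x) (mul y y x))
          (convolve (Δ x y) (map₂ (mul y x y) (mul y x y)) (Δ y x ∘ₗ S x y) (Δ x y)) G :=
        (convolve_assoc _ _ _ hcoassoc _ _ _ _ _ _ _ (map₂_mul_assoc mul y x y x hassoc)).symm
    _ = G := by
        rw [hleft, convolve_smulRight_left _ _ _ _ _ hcounitL, hunitL, LinearMap.id_comp]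

section HopfModule

variable {M : X → X → Type*} [∀ x y, AddCommMonoid (M x y)] [∀ x y, Module k (M x y)]
  (ψ : ∀ x y z, M x y →ₗ[k] A y z →ₗ[k] M x z) (ρ : ∀ x y, M x y →ₗ[k] M x y ⊗[k] A x y)

theorem coaction_comp_convolve_antipode (x y : X)
    (hcoassoc : (TensorProduct.assoc k _ _ _).toLinearMap ∘ₗ (Δ x y).rTensor _ ∘ₗ Δ x y
      = (Δ x y).lTensor _ ∘ₗ Δ x y)
    (hcounitL : (TensorProduct.lid k _).toLinearMap ∘ₗ (ε x y).rTensor _ ∘ₗ Δ x y = LinearMap.id)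
    (hSl : convolve (Δ x y) (mul x y x) LinearMap.id (S x y) = (ε x y).smulRight (one x))
    (hΔS : Δ y x ∘ₗ S x y = convolve (Δ x y) (mk k (A y x) (A y x)).flip (S x y) (S x y))
    (hρ : (TensorProduct.assoc k _ _ _).toLinearMap ∘ₗ (ρ x y).rTensor _ ∘ₗ ρ x y
      = (Δ x y).lTensor _ ∘ₗ ρ x y)
    (hcompat : ∀ m a, ρ x x (ψ x y x m a) = map₂ (ψ x y x) (mul x y x) (ρ x y m) (Δ y x a)) :
    ρ x x ∘ₗ convolve (ρ x y) (ψ x y x) LinearMap.id (S x y)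
      = (mk k (M x x) (A x x)).flip (one x)
          ∘ₗ convolve (ρ x y) (ψ x y x) LinearMap.id (S x y) := by
  have hcompat' : (ψ x y x).compr₂ (ρ x x)
      = (map₂ (ψ x y x) (mul x y x)).compl₁₂ (ρ x y) (Δ y x) := by
    ext m a
    exact hcompat m a
  rw [comp_convolve, hcompat', ← convolve_comp_comp, LinearMap.comp_id, hΔS,
    convolve_map₂_antipode_cop Δ ε mul one S x y hcoassoc hcounitL hSl _ _ hρ]

theorem convolve_convolve_antipode_id (x y : X)
    (hρ : (TensorProduct.assoc k _ _ _).toLinearMap ∘ₗ (ρ x y).rTensor _ ∘ₗ ρ x y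
      = (Δ x y).lTensor _ ∘ₗ ρ x y)
    (hρcounit : (TensorProduct.rid k _).toLinearMap ∘ₗ (ε x y).lTensor _ ∘ₗ ρ x y
      = LinearMap.id)
    (hSr : convolve (Δ x y) (mul y x y) (S x y) LinearMap.id = (ε x y).smulRight (one y))
    (hψassoc : ∀ m a b, ψ x x y (ψ x y x m a) b = ψ x y y m (mul y x y a b))
    (hψone : ∀ m, ψ x y y m (one y) = m) :
    convolve (ρ x y) (ψ x x y) (convolve (ρ x y) (ψ x y x) LinearMap.id (S x y)) LinearMap.id
      = LinearMap.id := by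
  rw [convolve_assoc _ _ _ hρ _ _ _ _ _ (mul y x y) (ψ x y y) hψassoc, hSr,
    convolve_smulRight_right _ _ _ _ _ hρcounit]
  ext m
  simp [hψone]

theorem coaction_comp_act_of_coinvariant (x y : X) (m₀ : M x x)
    (hm₀ : ρ x x m₀ = m₀ ⊗ₜ one x)
    (hcompat : ∀ m a, ρ x y (ψ x x y m a) = map₂ (ψ x x y) (mul x x y) (ρ x x m) (Δ x y a))
    (hone_mul : ∀ a, mul x x y (one x) a = a) :
    ρ x y ∘ₗ ψ x x y m₀ = (ψ x x y m₀).rTensor _ ∘ₗ Δ x y := by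
  have hone : mul x x y (one x) = LinearMap.id := LinearMap.ext hone_mul
  ext a
  rw [LinearMap.comp_apply, hcompat, hm₀, map₂_apply_tmul, hone]
  rfl

theorem convolve_antipode_comp_act (x y : X) (m₀ : M x x)
    (hact : ρ x y ∘ₗ ψ x x y m₀ = (ψ x x y m₀).rTensor _ ∘ₗ Δ x y)
    (hψassoc : ∀ a b, ψ x y x (ψ x x y m₀ a) b = ψ x x x m₀ (mul x y x a b))
    (hψone : ψ x x x m₀ (one x) = m₀)
    (hSl : convolve (Δ x y) (mul x y x) LinearMap.id (S x y) = (ε x y).smulRight (one x)) :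
    convolve (ρ x y) (ψ x y x) LinearMap.id (S x y) ∘ₗ ψ x x y m₀ = (ε x y).smulRight m₀ := by
  have hψassoc' : ψ x y x ∘ₗ ψ x x y m₀ = (mul x y x).compr₂ (ψ x x x m₀) := by
    ext a b
    exact hψassoc a b
  calc convolve (ρ x y) (ψ x y x) LinearMap.id (S x y) ∘ₗ ψ x x y m₀
      = convolve (ρ x y ∘ₗ ψ x x y m₀) (ψ x y x) LinearMap.id (S x y) := rfl
    _ = ψ x x x m₀ ∘ₗ convolve (Δ x y) (mul x y x) LinearMap.id (S x y) := by
      rw [hact, convolve_rTensor_comp, LinearMap.id_comp, ← LinearMap.comp_id (ψ x x y m₀),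
        convolve_comp_left, hψassoc', comp_convolve]
    _ = (ε x y).smulRight m₀ := by
      rw [hSl]
      ext a
      simp [hψone]

end HopfModule

end HopfCategory

theorem hopf_module_fundamental_isomorphism_general
    {k : Type*} [CommRing k] {X : Type*}
    (A : X → X → Type*)
    [∀ x y, AddCommGroup (A x y)] [∀ x y, Module k (A x y)]
    (Δ : ∀ x y, A x y →ₗ[k] A x y ⊗[k] A x y)
    (ε : ∀ x y, A x y →ₗ[k] k)
    (mul : ∀ x y z, A x y →ₗ[k] A y z →ₗ[k] A x z)
    (one : ∀ x, A x x)
    (coassoc : ∀ x y (a : A x y),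
      (TensorProduct.assoc k (A x y) (A x y) (A x y))
          ((TensorProduct.map (Δ x y) LinearMap.id) (Δ x y a))
        = (TensorProduct.map LinearMap.id (Δ x y)) (Δ x y a))
    (counit_left : ∀ x y (a : A x y),
      (TensorProduct.lid k (A x y)) ((TensorProduct.map (ε x y) LinearMap.id) (Δ x y a)) = a)
    (counit_right : ∀ x y (a : A x y),
      (TensorProduct.rid k (A x y)) ((TensorProduct.map LinearMap.id (ε x y)) (Δ x y a)) = a)
    (mul_assoc' : ∀ x y z w (a : A x y) (b : A y z) (c : A z w),
      mul x z w (mul x y z a b) c = mul x y w a (mul y z w b c))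
    (one_mul' : ∀ x y (a : A x y), mul x x y (one x) a = a)
    (mul_one' : ∀ x y (a : A x y), mul x y y a (one y) = a)
    (Δ_mul : ∀ x y z (a : A x y) (b : A y z),
      Δ x z (mul x y z a b)
        = (TensorProduct.map (TensorProduct.lift (mul x y z)) (TensorProduct.lift (mul x y z)))
            ((TensorProduct.tensorTensorTensorComm k (A x y) (A x y) (A y z) (A y z))
              ((Δ x y a) ⊗ₜ[k] (Δ y z b))))
    (Δ_one : ∀ x, Δ x x (one x) = (one x) ⊗ₜ[k] (one x))
    (S : ∀ x y, A x y →ₗ[k] A y x)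
    (S_left : ∀ x y (h : A x y),
      (TensorProduct.lift (mul x y x)) ((TensorProduct.map LinearMap.id (S x y)) (Δ x y h))
        = ε x y h • one x)
    (S_right : ∀ x y (h : A x y),
      (TensorProduct.lift (mul y x y)) ((TensorProduct.map (S x y) LinearMap.id) (Δ x y h))
        = ε x y h • one y)
    (M : X → X → Type*)
    [∀ x y, AddCommGroup (M x y)] [∀ x y, Module k (M x y)]
    (ψ : ∀ x y z, M x y →ₗ[k] A y z →ₗ[k] M x z)
    (ψ_assoc : ∀ x y z w (m : M x y) (a : A y z) (b : A z w),
      ψ x z w (ψ x y z m a) b = ψ x y w m (mul y z w a b))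
    (ψ_one : ∀ x y (m : M x y), ψ x y y m (one y) = m)
    (ρ : ∀ x y, M x y →ₗ[k] M x y ⊗[k] A x y)
    (ρ_coassoc : ∀ x y (m : M x y),
      (TensorProduct.map (ρ x y) LinearMap.id) (ρ x y m)
        = (TensorProduct.assoc k (M x y) (A x y) (A x y)).symm
            ((TensorProduct.map LinearMap.id (Δ x y)) (ρ x y m)))
    (ρ_counit : ∀ x y (m : M x y),
      (TensorProduct.rid k (M x y)) ((TensorProduct.map LinearMap.id (ε x y)) (ρ x y m)) = m)
    (ρ_compat : ∀ x y z (m : M x y) (a : A y z),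
      ρ x z (ψ x y z m a)
        = (TensorProduct.map (TensorProduct.lift (ψ x y z)) (TensorProduct.lift (mul x y z)))
            ((TensorProduct.tensorTensorTensorComm k (M x y) (A x y) (A y z) (A y z))
              ((ρ x y m) ⊗ₜ[k] (Δ y z a))))
 :
    ∀ x y,
      Function.Bijective
          (TensorProduct.lift ((ψ x x y) ∘ₗ (coinv (ρ x x) (one x)).subtype))
        ∧ (∀ (m : ↥(coinv (ρ x x) (one x))) (a : A x y),
            betaMap (ρ x y) ((TensorProduct.lift (ψ x y x)) ∘ₗ (TensorProduct.map LinearMap.id (S x y)))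
                (ψ x x y (m : M x x) a)
              = (m : M x x) ⊗ₜ[k] a)
        ∧ (∀ m : M x y,
            (TensorProduct.lift (ψ x x y))
                (betaMap (ρ x y) ((TensorProduct.lift (ψ x y x)) ∘ₗ (TensorProduct.map LinearMap.id (S x y))) m)
              = m) := by
  intro x y
  have hcompat := fun x y z (m : M x y) (a : A y z) =>
    (ρ_compat x y z m a).trans (map₂_apply_eq _ _ _ _).symm
  have hρ : (TensorProduct.assoc k _ _ _).toLinearMap ∘ₗ (ρ x y).rTensor _ ∘ₗ ρ x y
      = (Δ x y).lTensor _ ∘ₗ ρ x y :=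
    LinearMap.ext fun m => (LinearEquiv.eq_symm_apply _).1 (ρ_coassoc x y m)
  have hΔS := HopfCategory.comul_comp_antipode Δ ε mul one S x y (LinearMap.ext (coassoc x y))
    (LinearMap.ext (counit_left x y)) (LinearMap.ext (counit_right x y))
    (LinearMap.ext (S_left x y)) (LinearMap.ext (S_right x y))
    (fun a b => (Δ_mul y x y a b).trans (map₂_apply_eq _ _ _ _).symm) (Δ_one y)
    (mul_assoc' y x y x) (one_mul' y x) (mul_one' y x)
  have hact : ∀ m₀ ∈ coinv (ρ x x) (one x),
      ρ x y ∘ₗ ψ x x y m₀ = (ψ x x y m₀).rTensor _ ∘ₗ Δ x y := fun m₀ hm₀ =>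
    HopfCategory.coaction_comp_act_of_coinvariant Δ mul one ψ ρ x y m₀
      ((mem_coinv_iff _ _ _).1 hm₀) (hcompat x x y) (one_mul' x y)
  have hPact : ∀ m₀ ∈ coinv (ρ x x) (one x), convolve (ρ x y) (ψ x y x) LinearMap.id (S x y)
      ∘ₗ ψ x x y m₀ = (ε x y).smulRight m₀ := fun m₀ hm₀ =>
    HopfCategory.convolve_antipode_comp_act Δ ε mul one S ψ ρ x y m₀ (hact m₀ hm₀)
      (ψ_assoc x x y x m₀) (ψ_one x x m₀) (LinearMap.ext (S_left x y))
  have hsection := HopfCategory.convolve_convolve_antipode_id Δ ε mul one S ψ ρ x y hρ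
    (LinearMap.ext (ρ_counit x y)) (LinearMap.ext (S_right x y)) (ψ_assoc x y x y) (ψ_one x y)
  refine ⟨bijective_lift_comp_subtype_coinv (ρ x x) (one x) (ψ x x y) (ρ x y) (Δ x y) (ε x y)
    (LinearMap.ext (counit_left x y)) _ (HopfCategory.coaction_comp_convolve_antipode Δ ε mul
      one S ψ ρ x y (LinearMap.ext (coassoc x y)) (LinearMap.ext (counit_left x y))
      (LinearMap.ext (S_left x y)) hΔS hρ (hcompat x y x)) hsection hact hPact,
    fun m a => ?_, fun m => ?_⟩
  · rw [betaMap_eq, LinearMap.comp_assoc]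
    exact LinearMap.congr_fun (rTensor_comp_eq_mk_of_comp_eq_smulRight (ρ x y) (Δ x y) (ε x y)
      (LinearMap.ext (counit_left x y)) _ (hact m m.2) _ (m : M x x) (hPact m m.2)) a
  · rw [betaMap_eq, LinearMap.comp_assoc]
    exact LinearMap.congr_fun hsection m

theorem hopf_module_fundamental_isomorphism
    {k : Type*} [CommRing k] {X : Type*}
    (A : X → X → Type*)
    [∀ x y, AddCommGroup (A x y)] [∀ x y, Module k (A x y)]
    (Δ : ∀ x y, A x y →ₗ[k] A x y ⊗[k] A x y)
    (ε : ∀ x y, A x y →ₗ[k] k)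
    (mul : ∀ x y z, A x y →ₗ[k] A y z →ₗ[k] A x z)
    (one : ∀ x, A x x)
    (coassoc : ∀ x y (a : A x y),
      (TensorProduct.assoc k (A x y) (A x y) (A x y))
          ((TensorProduct.map (Δ x y) LinearMap.id) (Δ x y a))
        = (TensorProduct.map LinearMap.id (Δ x y)) (Δ x y a))
    (counit_left : ∀ x y (a : A x y),
      (TensorProduct.lid k (A x y)) ((TensorProduct.map (ε x y) LinearMap.id) (Δ x y a)) = a)
    (counit_right : ∀ x y (a : A x y),
      (TensorProduct.rid k (A x y)) ((TensorProduct.map LinearMap.id (ε x y)) (Δ x y a)) = a)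
    (mul_assoc' : ∀ x y z w (a : A x y) (b : A y z) (c : A z w),
      mul x z w (mul x y z a b) c = mul x y w a (mul y z w b c))
    (one_mul' : ∀ x y (a : A x y), mul x x y (one x) a = a)
    (mul_one' : ∀ x y (a : A x y), mul x y y a (one y) = a)
    (Δ_mul : ∀ x y z (a : A x y) (b : A y z),
      Δ x z (mul x y z a b)
        = (TensorProduct.map (TensorProduct.lift (mul x y z)) (TensorProduct.lift (mul x y z)))
            ((TensorProduct.tensorTensorTensorComm k (A x y) (A x y) (A y z) (A y z))
              ((Δ x y a) ⊗ₜ[k] (Δ y z b))))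
    (ε_mul : ∀ x y z (a : A x y) (b : A y z),
      ε x z (mul x y z a b) = ε x y a * ε y z b)
    (Δ_one : ∀ x, Δ x x (one x) = (one x) ⊗ₜ[k] (one x))
    (ε_one : ∀ x, ε x x (one x) = 1)
    (S : ∀ x y, A x y →ₗ[k] A y x)
    (S_left : ∀ x y (h : A x y),
      (TensorProduct.lift (mul x y x)) ((TensorProduct.map LinearMap.id (S x y)) (Δ x y h))
        = ε x y h • one x)
    (S_right : ∀ x y (h : A x y),
      (TensorProduct.lift (mul y x y)) ((TensorProduct.map (S x y) LinearMap.id) (Δ x y h))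
        = ε x y h • one y)
    (M : X → X → Type*)
    [∀ x y, AddCommGroup (M x y)] [∀ x y, Module k (M x y)]
    (ψ : ∀ x y z, M x y →ₗ[k] A y z →ₗ[k] M x z)
    (ψ_assoc : ∀ x y z w (m : M x y) (a : A y z) (b : A z w),
      ψ x z w (ψ x y z m a) b = ψ x y w m (mul y z w a b))
    (ψ_one : ∀ x y (m : M x y), ψ x y y m (one y) = m)
    (ρ : ∀ x y, M x y →ₗ[k] M x y ⊗[k] A x y)
    (ρ_coassoc : ∀ x y (m : M x y),
      (TensorProduct.map (ρ x y) LinearMap.id) (ρ x y m)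
        = (TensorProduct.assoc k (M x y) (A x y) (A x y)).symm
            ((TensorProduct.map LinearMap.id (Δ x y)) (ρ x y m)))
    (ρ_counit : ∀ x y (m : M x y),
      (TensorProduct.rid k (M x y)) ((TensorProduct.map LinearMap.id (ε x y)) (ρ x y m)) = m)
    (ρ_compat : ∀ x y z (m : M x y) (a : A y z),
      ρ x z (ψ x y z m a)
        = (TensorProduct.map (TensorProduct.lift (ψ x y z)) (TensorProduct.lift (mul x y z)))
            ((TensorProduct.tensorTensorTensorComm k (M x y) (A x y) (A y z) (A y z))
              ((ρ x y m) ⊗ₜ[k] (Δ y z a))))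
 :
    ∀ x y,
      Function.Bijective
          (TensorProduct.lift ((ψ x x y) ∘ₗ (coinv (ρ x x) (one x)).subtype))
        ∧ (∀ (m : ↥(coinv (ρ x x) (one x))) (a : A x y),
            betaMap (ρ x y) ((TensorProduct.lift (ψ x y x)) ∘ₗ (TensorProduct.map LinearMap.id (S x y)))
                (ψ x x y (m : M x x) a)
              = (m : M x x) ⊗ₜ[k] a)
        ∧ (∀ m : M x y,
            (TensorProduct.lift (ψ x x y))
                (betaMap (ρ x y) ((TensorProduct.lift (ψ x y x)) ∘ₗ (TensorProduct.map LinearMap.id (S x y))) m)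
              = m) :=
  hopf_module_fundamental_isomorphism_general A Δ ε mul one coassoc counit_left counit_right
    mul_assoc' one_mul' mul_one' Δ_mul Δ_one S S_left S_right M ψ ψ_assoc ψ_one ρ ρ_coassoc ρ_counit
    ρ_compat
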